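/- arXiv:2212.02693 — 7 statements merged into one kernel-verified Lean document; each statement's English description precedes it below -/
import Mathlib

section
/- Let E be a real Hilbert space, Z ⊆ E a nonempty closed convex set, and Π : E → E the metric projection onto Z. Let G : E → E be γ-strongly monotone and L-Lipschitz with 0 < γ ≤ L, and let the step size satisfy 0 < η ≤ γ/L². Then for all z, z' ∈ E, ‖Π(z - η·G z) - Π(z' - η·G z')‖² ≤ (1 - ηγ)·‖z - z'‖². -/
/-! The variational inequality makes the projection firmly nonexpansive, hence 1-Lipschitz, so it
suffices to bound the unprojected step `x - η • g` with `x = z - z'`, `g = G z - G z'`. Expanding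
its square, strong monotonicity and the Lipschitz bound give
`‖x - η • g‖² ≤ (1 - 2ηγ + η²L²)‖x‖²`, and `η L² ≤ γ`. -/

open RealInnerProductSpace

section VariationalProjection

variable {E : Type*} [NormedAddCommGroup E] [InnerProductSpace ℝ E]

theorem sq_norm_sub_le_inner_of_variational_ineq {Z : Set E} {P : E → E}
    (hP : ∀ z : E, P z ∈ Z ∧ ∀ w ∈ Z, ⟪z - P z, w - P z⟫ ≤ 0) (u v : E) :
    ‖P u - P v‖ ^ 2 ≤ ⟪u - v, P u - P v⟫ := by
  have hu := (hP u).2 (P v) (hP v).1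
  have hv := (hP v).2 (P u) (hP u).1
  have hsum : ⟪u - v, P u - P v⟫ - ‖P u - P v‖ ^ 2
      = -(⟪u - P u, P v - P u⟫ + ⟪v - P v, P u - P v⟫) := by
    rw [← real_inner_self_eq_norm_sq]
    simp only [inner_sub_left, inner_sub_right, real_inner_comm]
    ring
  linarith

theorem norm_sub_le_of_variational_ineq {Z : Set E} {P : E → E}
    (hP : ∀ z : E, P z ∈ Z ∧ ∀ w ∈ Z, ⟪z - P z, w - P z⟫ ≤ 0) (u v : E) :
    ‖P u - P v‖ ≤ ‖u - v‖ := by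
  have hfirm := sq_norm_sub_le_inner_of_variational_ineq hP u v
  have hcs := real_inner_le_norm (u - v) (P u - P v)
  nlinarith [norm_nonneg (P u - P v), norm_nonneg (u - v)]

end VariationalProjection

theorem norm_sub_smul_sq_le {E : Type*} [NormedAddCommGroup E] [InnerProductSpace ℝ E]
    {x g : E} {γ L η : ℝ} (hmono : γ * ‖x‖ ^ 2 ≤ ⟪g, x⟫) (hlip : ‖g‖ ≤ L * ‖x‖)
    (hη0 : 0 ≤ η) (hηL : η * L ^ 2 ≤ γ) :
    ‖x - η • g‖ ^ 2 ≤ (1 - η * γ) * ‖x‖ ^ 2 := by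
  have hexpand : ‖x - η • g‖ ^ 2 = ‖x‖ ^ 2 - 2 * η * ⟪g, x⟫ + η ^ 2 * ‖g‖ ^ 2 := by
    rw [norm_sub_sq_real, real_inner_smul_right, norm_smul, mul_pow, Real.norm_eq_abs, sq_abs,
      real_inner_comm]
    ring
  have hlip_sq : ‖g‖ ^ 2 ≤ L ^ 2 * ‖x‖ ^ 2 := by
    rw [← mul_pow]; exact pow_le_pow_left₀ (norm_nonneg g) hlip 2
  have hquad : η ^ 2 * ‖g‖ ^ 2 ≤ η * γ * ‖x‖ ^ 2 :=
    calc η ^ 2 * ‖g‖ ^ 2 ≤ η ^ 2 * (L ^ 2 * ‖x‖ ^ 2) := by gcongr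
      _ = η * (η * L ^ 2) * ‖x‖ ^ 2 := by ring
      _ ≤ η * γ * ‖x‖ ^ 2 := by gcongr
  have hcross : η * (γ * ‖x‖ ^ 2) ≤ η * ⟪g, x⟫ := mul_le_mul_of_nonneg_left hmono hη0
  rw [hexpand]
  linarith

theorem projected_gradient_step_contraction_general
    {E : Type*} [NormedAddCommGroup E] [InnerProductSpace ℝ E]
    (Z : Set E)
    (proj : E → E)
    (hproj : ∀ z : E, proj z ∈ Z ∧ ∀ w ∈ Z, ⟪z - proj z, w - proj z⟫ ≤ 0)
    (G : E → E) (γ L : ℝ) (hγ : 0 < γ)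
    (hmono : ∀ z z' : E, γ * ‖z - z'‖ ^ 2 ≤ ⟪G z - G z', z - z'⟫)
    (hlip : ∀ z z' : E, ‖G z - G z'‖ ≤ L * ‖z - z'‖)
    (η : ℝ) (hη0 : 0 < η) (hη : η ≤ γ / L ^ 2) :
    ∀ z z' : E,
      ‖proj (z - η • G z) - proj (z' - η • G z')‖ ^ 2 ≤ (1 - η * γ) * ‖z - z'‖ ^ 2 := by
  intro z z'
  have hηL : η * L ^ 2 ≤ γ := by
    rcases (sq_nonneg L).eq_or_lt with hL | hL
    · rw [← hL, mul_zero]; exact hγ.le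
    · exact (le_div_iff₀ hL).1 hη
  have hstep : (z - η • G z) - (z' - η • G z') = (z - z') - η • (G z - G z') := by
    rw [smul_sub]; abel
  calc ‖proj (z - η • G z) - proj (z' - η • G z')‖ ^ 2
      ≤ ‖(z - z') - η • (G z - G z')‖ ^ 2 := by
        rw [← hstep]; gcongr; exact norm_sub_le_of_variational_ineq hproj _ _
    _ ≤ (1 - η * γ) * ‖z - z'‖ ^ 2 :=
        norm_sub_smul_sq_le (hmono z z') (hlip z z') hη0.le hηL

/-- Projected gradient step contraction: if `G` is `γ`-strongly monotone and
`L`-Lipschitz with `0 < γ ≤ L`, `proj` is the metric projection onto a nonempty closed convex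
set `Z`, and `0 < η ≤ γ / L²`, then
`‖proj (z - η G z) - proj (z' - η G z')‖² ≤ (1 - ηγ)‖z - z'‖²`. -/
theorem projected_gradient_step_contraction
    {E : Type*} [NormedAddCommGroup E] [InnerProductSpace ℝ E] [CompleteSpace E]
    (Z : Set E) (hZne : Z.Nonempty) (hZclosed : IsClosed Z) (hZconvex : Convex ℝ Z)
    (proj : E → E)
    (hproj : ∀ z : E, proj z ∈ Z ∧ ∀ w ∈ Z, ⟪z - proj z, w - proj z⟫ ≤ 0)
    (G : E → E) (γ L : ℝ) (hγ : 0 < γ) (hγL : γ ≤ L)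
    (hmono : ∀ z z' : E, γ * ‖z - z'‖ ^ 2 ≤ ⟪G z - G z', z - z'⟫)
    (hlip : ∀ z z' : E, ‖G z - G z'‖ ≤ L * ‖z - z'‖)
    (η : ℝ) (hη0 : 0 < η) (hη : η ≤ γ / L ^ 2) :
    ∀ z z' : E,
      ‖proj (z - η • G z) - proj (z' - η • G z')‖ ^ 2 ≤ (1 - η * γ) * ‖z - z'‖ ^ 2 :=
  projected_gradient_step_contraction_general Z proj hproj G γ L hγ hmono hlip η hη0 hη
end

section
/- Primal-dual tracking of equilibrium points: Let E be a real Hilbert space. For each t ∈ ℕ let Z_t ⊆ E be a nonempty closed convex set with metric projection Π_t : E → E, and let G_t : E → E be γ̂-strongly monotone and L̂-Lipschitz with 0 < γ̂ ≤ L̂. Let the step size satisfy 0 < η < min(1/γ̂, γ̂/L̂²), and set α := √(1 - ηγ̂) ∈ (0,1). Suppose z̄_t ∈ Z_t satisfies z̄_t = Π_t(z̄_t - η·G_t z̄_t) for every t, and that the drift is uniformly bounded: ‖z̄_{t+1} - z̄_t‖ ≤ Δ for all t. Then the sequence defined by z_{t+1} = Π_t(z_t - η·G_t z_t) from any initial point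 z_0 ∈ E satisfies, for all t ∈ ℕ, ‖z_t - z̄_t‖ ≤ α^t·‖z_0 - z̄_0‖ + Δ/(1 - α). -/
/-!
The online step is `z ↦ Π_t (z - η G_t z)`, and its fixed point is `z̄_t`. A projection
onto a closed convex set is nonexpansive, and for `η L̂² ≤ γ̂` the forward step
`z ↦ z - η G_t z` contracts distances by `α = √(1 - η γ̂)`, since
`‖x - η(G a - G b)‖² ≤ (1 - 2ηγ̂ + η²L̂²)‖x‖²` with `x = a - b`. So every online map is an
`α`-contraction fixed at `z̄_t`. This gives `‖z_{t+1} - z̄_{t+1}‖ ≤ α‖z_t - z̄_t‖ + Δ`,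
and unrolling the recursion gives the bound.
-/

open RealInnerProductSpace

section

variable {E : Type*} [NormedAddCommGroup E] [InnerProductSpace ℝ E]

theorem norm_sub_le_of_variational_inequality {S : Set E} {p : E → E}
    (hp : ∀ z, p z ∈ S ∧ ∀ w ∈ S, ⟪z - p z, w - p z⟫ ≤ 0) (a b : E) :
    ‖p a - p b‖ ≤ ‖a - b‖ := by
  have hab := (hp a).2 (p b) (hp b).1
  have hba := (hp b).2 (p a) (hp a).1
  have firmly : ‖p a - p b‖ ^ 2 ≤ ⟪a - b, p a - p b⟫ := by
    have split : ⟪a - b, p a - p b⟫ - ‖p a - p b‖ ^ 2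
        = -⟪a - p a, p b - p a⟫ - ⟪b - p b, p a - p b⟫ := by
      rw [← real_inner_self_eq_norm_sq]
      simp only [inner_sub_left, inner_sub_right]
      ring
    linarith
  have := firmly.trans (real_inner_le_norm _ _)
  nlinarith [norm_nonneg (p a - p b), norm_nonneg (a - b)]

theorem norm_sub_smul_sub_sq_le {G : E → E} {γ L η : ℝ}
    (hmono : ∀ z z', γ * ‖z - z'‖ ^ 2 ≤ ⟪G z - G z', z - z'⟫)
    (hlip : ∀ z z', ‖G z - G z'‖ ≤ L * ‖z - z'‖) (hη : 0 ≤ η) (hηL : η * L ^ 2 ≤ γ)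
    (a b : E) :
    ‖(a - η • G a) - (b - η • G b)‖ ^ 2 ≤ (1 - η * γ) * ‖a - b‖ ^ 2 := by
  have expand : ‖(a - η • G a) - (b - η • G b)‖ ^ 2
      = ‖a - b‖ ^ 2 - 2 * η * ⟪G a - G b, a - b⟫ + η ^ 2 * ‖G a - G b‖ ^ 2 := by
    rw [show (a - η • G a) - (b - η • G b) = (a - b) - η • (G a - G b) by
        rw [smul_sub]; abel,
      norm_sub_sq_real, real_inner_smul_right, norm_smul, Real.norm_of_nonneg hη, mul_pow,
      real_inner_comm]
    ring
  have hG : ‖G a - G b‖ ^ 2 ≤ L ^ 2 * ‖a - b‖ ^ 2 := by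
    rw [← mul_pow]
    exact pow_le_pow_left₀ (norm_nonneg _) (hlip a b) 2
  rw [expand]
  nlinarith [mul_le_mul_of_nonneg_left (hmono a b) hη,
    mul_le_mul_of_nonneg_left hG (sq_nonneg η),
    mul_le_mul_of_nonneg_right (mul_le_mul_of_nonneg_left hηL hη) (sq_nonneg ‖a - b‖)]

theorem norm_sub_smul_sub_le {G : E → E} {γ L η : ℝ}
    (hmono : ∀ z z', γ * ‖z - z'‖ ^ 2 ≤ ⟪G z - G z', z - z'⟫)
    (hlip : ∀ z z', ‖G z - G z'‖ ≤ L * ‖z - z'‖) (hη : 0 ≤ η) (hηL : η * L ^ 2 ≤ γ)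
    (a b : E) :
    ‖(a - η • G a) - (b - η • G b)‖ ≤ √(1 - η * γ) * ‖a - b‖ := by
  rw [← Real.sqrt_sq (norm_nonneg _), ← Real.sqrt_sq (norm_nonneg (a - b)),
    ← Real.sqrt_mul' _ (sq_nonneg _)]
  exact Real.sqrt_le_sqrt (norm_sub_smul_sub_sq_le hmono hlip hη hηL a b)

end

theorem le_pow_mul_add_div_one_sub {e : ℕ → ℝ} {α Δ : ℝ} (hα0 : 0 ≤ α) (hα1 : α < 1)
    (hΔ : 0 ≤ Δ) (hstep : ∀ t, e (t + 1) ≤ α * e t + Δ) (t : ℕ) :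
    e t ≤ α ^ t * e 0 + Δ / (1 - α) := by
  induction t with
  | zero =>
    have : 0 ≤ Δ / (1 - α) := div_nonneg hΔ (by linarith)
    linarith
  | succ t ih =>
    calc e (t + 1) ≤ α * (α ^ t * e 0 + Δ / (1 - α)) + Δ := by
          nlinarith [hstep t, mul_le_mul_of_nonneg_left ih hα0]
      _ = α ^ (t + 1) * e 0 + Δ / (1 - α) := by
          field_simp [(by linarith : 1 - α ≠ 0)]
          ring

theorem norm_sub_le_of_contraction_tracking {X : Type*} [SeminormedAddCommGroup X]
    {T : ℕ → X → X} {α Δ : ℝ} {z zbar : ℕ → X} (hα0 : 0 ≤ α) (hα1 : α < 1)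
    (hT : ∀ t a b, ‖T t a - T t b‖ ≤ α * ‖a - b‖) (hfix : ∀ t, T t (zbar t) = zbar t)
    (hdrift : ∀ t, ‖zbar (t + 1) - zbar t‖ ≤ Δ) (hz : ∀ t, z (t + 1) = T t (z t)) (t : ℕ) :
    ‖z t - zbar t‖ ≤ α ^ t * ‖z 0 - zbar 0‖ + Δ / (1 - α) := by
  refine le_pow_mul_add_div_one_sub (e := fun t => ‖z t - zbar t‖) hα0 hα1 ((norm_nonneg _).trans (hdrift 0)) (fun t => ?_) t
  have contract := hT t (z t) (zbar t)
  rw [← hz t, hfix t] at contract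
  calc ‖z (t + 1) - zbar (t + 1)‖
      ≤ ‖z (t + 1) - zbar t‖ + ‖zbar t - zbar (t + 1)‖ := norm_sub_le_norm_sub_add_norm_sub ..
    _ ≤ α * ‖z t - zbar t‖ + Δ := add_le_add contract (norm_sub_rev (zbar t) _ ▸ hdrift t)

theorem primal_dual_tracking_general
    {E : Type*} [NormedAddCommGroup E] [InnerProductSpace ℝ E]
    (Z : ℕ → Set E)
    (proj : ℕ → E → E)
    (hproj : ∀ t, ∀ z : E, proj t z ∈ Z t ∧ ∀ w ∈ Z t, ⟪z - proj t z, w - proj t z⟫ ≤ 0)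
    (G : ℕ → E → E) (γ L : ℝ) (hγ : 0 < γ)
    (hmono : ∀ t, ∀ z z' : E, γ * ‖z - z'‖ ^ 2 ≤ ⟪G t z - G t z', z - z'⟫)
    (hlip : ∀ t, ∀ z z' : E, ‖G t z - G t z'‖ ≤ L * ‖z - z'‖)
    (η : ℝ) (hη0 : 0 < η) (hη : η < min (1 / γ) (γ / L ^ 2))
    (α : ℝ) (hα : α = Real.sqrt (1 - η * γ))
    (Δ : ℝ) (zbar : ℕ → E)
    (hfix : ∀ t, zbar t = proj t (zbar t - η • G t (zbar t)))
    (hdrift : ∀ t, ‖zbar (t + 1) - zbar t‖ ≤ Δ)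
    (z : ℕ → E) (hz : ∀ t, z (t + 1) = proj t (z t - η • G t (z t))) :
    ∀ t : ℕ, ‖z t - zbar t‖ ≤ α ^ t * ‖z 0 - zbar 0‖ + Δ / (1 - α) := by
  have hηγ : η * γ < 1 := by
    have := lt_of_lt_of_le hη (min_le_left _ _)
    rwa [lt_div_iff₀ hγ] at this
  -- `L = 0` is split off because `γ / L ^ 2` is then the junk value `0`
  have hηL : η * L ^ 2 ≤ γ := by
    rcases eq_or_ne L 0 with rfl | hL
    · simpa using hγ.le
    · have := lt_of_lt_of_le hη (min_le_right _ _)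
      exact ((lt_div_iff₀ (by positivity)).mp this).le
  have hα1 : α < 1 := by
    rw [hα, Real.sqrt_lt' one_pos]
    nlinarith
  intro t
  refine norm_sub_le_of_contraction_tracking (T := fun t x => proj t (x - η • G t x))
    (hα ▸ Real.sqrt_nonneg _) hα1 (fun t a b => ?_) (fun t => (hfix t).symm) hdrift hz t
  exact (norm_sub_le_of_variational_inequality (hproj t) _ _).trans
    (hα ▸ norm_sub_smul_sub_le (hmono t) (hlip t) hη0.le hηL a b)

/-- Primal-dual tracking of equilibrium points: the online projected
primal-dual iterates `z (t+1) = proj t (z t - η • G t (z t))` track the fixed points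
(`equilibrium points`) `zbar t` of the time-varying primal-dual maps, with
`‖z t - zbar t‖ ≤ α ^ t * ‖z 0 - zbar 0‖ + Δ / (1 - α)` where `α = √(1 - η γ̂)`. -/
theorem primal_dual_tracking
    {E : Type*} [NormedAddCommGroup E] [InnerProductSpace ℝ E] [CompleteSpace E]
    (Z : ℕ → Set E) (hZne : ∀ t, (Z t).Nonempty) (hZclosed : ∀ t, IsClosed (Z t))
    (hZconvex : ∀ t, Convex ℝ (Z t))
    (proj : ℕ → E → E)
    (hproj : ∀ t, ∀ z : E, proj t z ∈ Z t ∧ ∀ w ∈ Z t, ⟪z - proj t z, w - proj t z⟫ ≤ 0)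
    (G : ℕ → E → E) (γ L : ℝ) (hγ : 0 < γ) (hγL : γ ≤ L)
    (hmono : ∀ t, ∀ z z' : E, γ * ‖z - z'‖ ^ 2 ≤ ⟪G t z - G t z', z - z'⟫)
    (hlip : ∀ t, ∀ z z' : E, ‖G t z - G t z'‖ ≤ L * ‖z - z'‖)
    (η : ℝ) (hη0 : 0 < η) (hη : η < min (1 / γ) (γ / L ^ 2))
    (α : ℝ) (hα : α = Real.sqrt (1 - η * γ))
    (Δ : ℝ) (zbar : ℕ → E) (hzbarZ : ∀ t, zbar t ∈ Z t)
    (hfix : ∀ t, zbar t = proj t (zbar t - η • G t (zbar t)))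
    (hdrift : ∀ t, ‖zbar (t + 1) - zbar t‖ ≤ Δ)
    (z : ℕ → E) (hz : ∀ t, z (t + 1) = proj t (z t - η • G t (z t))) :
    ∀ t : ℕ, ‖z t - zbar t‖ ≤ α ^ t * ‖z 0 - zbar 0‖ + Δ / (1 - α) :=
  primal_dual_tracking_general Z proj hproj G γ L hγ hmono hlip η hη0 hη α hα Δ zbar hfix hdrift z
    hz
end

section
/- Asymptotic tracking: Let E be a real Hilbert space. For each t ∈ ℕ let Z_t ⊆ E be a nonempty closed convex set with metric projection Π_t : E → E, and let G_t : E → E be γ̂-strongly monotone and L̂-Lipschitz with 0 < γ̂ ≤ L̂. Let 0 < η < min(1/γ̂, γ̂/L̂²), set α := √(1 - ηγ̂) ∈ (0,1), suppose z̄_t ∈ Z_t satisfies z̄_t = Π_t(z̄_t - η·G_t z̄_t) for every t, and ‖z̄_{t+1} - z̄_t‖ ≤ Δ for all t. Then the sequence z_{t+1} = Π_t(z_t - η·G_t z_t), started from any z_0 ∈ E, satisfies limsup_{t→∞} ‖z_t - z̄_t‖ ≤ Δ/(1 - α). -/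
/-!
The forward step `x ↦ x - η • G x` of a `γ`-strongly monotone, `L`-Lipschitz map is a
contraction with factor `α = √(1 - ηγ)` as soon as `η L² ≤ γ`, and a metric projection onto a
convex set is nonexpansive. Since `z̄ t` is a fixed point of the `t`-th projected step, the
tracking error `eₜ = ‖z t - z̄ t‖` therefore obeys `eₜ₊₁ ≤ α eₜ + Δ`, the drift of `z̄` costing
at most `Δ` per step. Unrolling gives `eₜ ≤ αᵗ (e₀ - Δ/(1-α)) + Δ/(1-α)`, whose limit is
`Δ / (1 - α)`.
-/

open RealInnerProductSpace Filter

section InnerProductSpace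

variable {E : Type*} [NormedAddCommGroup E] [InnerProductSpace ℝ E]

theorem sq_norm_sub_le_inner_of_variational {S : Set E} {P : E → E}
    (hP : ∀ z : E, P z ∈ S ∧ ∀ w ∈ S, ⟪z - P z, w - P z⟫ ≤ 0) (u v : E) :
    ‖P u - P v‖ ^ 2 ≤ ⟪u - v, P u - P v⟫ := by
  have hu : ⟪u - P u, P v - P u⟫ ≤ 0 := (hP u).2 (P v) (hP v).1
  have hv : ⟪v - P v, P u - P v⟫ ≤ 0 := (hP v).2 (P u) (hP u).1
  have hsplit : u - v = ((u - P u) - (v - P v)) + (P u - P v) := by abel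
  rw [← neg_sub (P u) (P v), inner_neg_right] at hu
  rw [hsplit, inner_add_left, inner_sub_left, real_inner_self_eq_norm_sq]
  linarith

theorem norm_sub_le_of_variational {S : Set E} {P : E → E}
    (hP : ∀ z : E, P z ∈ S ∧ ∀ w ∈ S, ⟪z - P z, w - P z⟫ ≤ 0) (u v : E) :
    ‖P u - P v‖ ≤ ‖u - v‖ := by
  have h := (sq_norm_sub_le_inner_of_variational hP u v).trans (real_inner_le_norm _ _)
  rw [sq] at h
  rcases (norm_nonneg (P u - P v)).eq_or_lt with h0 | h0
  · rw [← h0]; exact norm_nonneg _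
  · exact le_of_mul_le_mul_right h h0

theorem sq_norm_forwardStep_sub_le {G : E → E} {γ L η : ℝ} {x y : E}
    (hmono : γ * ‖x - y‖ ^ 2 ≤ ⟪G x - G y, x - y⟫) (hlip : ‖G x - G y‖ ≤ L * ‖x - y‖)
    (hη : 0 ≤ η) (hηL : η * L ^ 2 ≤ γ) :
    ‖(x - η • G x) - (y - η • G y)‖ ^ 2 ≤ (1 - η * γ) * ‖x - y‖ ^ 2 := by
  have hsq : ‖G x - G y‖ ^ 2 ≤ L ^ 2 * ‖x - y‖ ^ 2 := by
    rw [← mul_pow]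
    exact pow_le_pow_left₀ (norm_nonneg _) hlip 2
  have hexpand : ‖(x - η • G x) - (y - η • G y)‖ ^ 2
      = ‖x - y‖ ^ 2 - 2 * η * ⟪G x - G y, x - y⟫ + η ^ 2 * ‖G x - G y‖ ^ 2 := by
    rw [show (x - η • G x) - (y - η • G y) = (x - y) - η • (G x - G y) by
      rw [smul_sub]; abel]
    rw [norm_sub_sq_real, real_inner_smul_right, norm_smul, Real.norm_of_nonneg hη,
      real_inner_comm]
    ring
  rw [hexpand]
  nlinarith [mul_le_mul_of_nonneg_left hmono hη, mul_le_mul_of_nonneg_left hsq (sq_nonneg η),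
    mul_le_mul_of_nonneg_left hηL (mul_nonneg hη (sq_nonneg ‖x - y‖))]

theorem norm_forwardStep_sub_le {G : E → E} {γ L η : ℝ} {x y : E}
    (hmono : γ * ‖x - y‖ ^ 2 ≤ ⟪G x - G y, x - y⟫) (hlip : ‖G x - G y‖ ≤ L * ‖x - y‖)
    (hη : 0 ≤ η) (hηL : η * L ^ 2 ≤ γ) :
    ‖(x - η • G x) - (y - η • G y)‖ ≤ Real.sqrt (1 - η * γ) * ‖x - y‖ := by
  rw [← Real.sqrt_sq (norm_nonneg (x - y)), ← Real.sqrt_mul' _ (sq_nonneg _)]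
  exact Real.le_sqrt_of_sq_le (sq_norm_forwardStep_sub_le hmono hlip hη hηL)

end InnerProductSpace

section Recursion

variable {a : ℕ → ℝ} {α Δ : ℝ}

theorem le_pow_mul_add_of_le_mul_add (hα0 : 0 ≤ α) (hα1 : α ≠ 1)
    (ha : ∀ t, a (t + 1) ≤ α * a t + Δ) (t : ℕ) :
    a t ≤ α ^ t * (a 0 - Δ / (1 - α)) + Δ / (1 - α) := by
  have h1α : 1 - α ≠ 0 := sub_ne_zero.mpr hα1.symm
  induction t with
  | zero => simp
  | succ n ih =>
    calc a (n + 1) ≤ α * a n + Δ := ha n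
      _ ≤ α * (α ^ n * (a 0 - Δ / (1 - α)) + Δ / (1 - α)) + Δ := by gcongr
      _ = α ^ (n + 1) * (a 0 - Δ / (1 - α)) + Δ / (1 - α) := by field_simp; ring

theorem limsup_le_of_le_mul_add (hα0 : 0 ≤ α) (hα1 : α < 1) (ha0 : ∀ t, 0 ≤ a t)
    (ha : ∀ t, a (t + 1) ≤ α * a t + Δ) :
    limsup a atTop ≤ Δ / (1 - α) := by
  have hlim : Tendsto (fun t => α ^ t * (a 0 - Δ / (1 - α)) + Δ / (1 - α)) atTop
      (nhds (Δ / (1 - α))) := by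
    simpa using ((tendsto_pow_atTop_nhds_zero_of_lt_one hα0 hα1).mul_const
      (a 0 - Δ / (1 - α))).add_const (Δ / (1 - α))
  calc limsup a atTop
      ≤ limsup (fun t => α ^ t * (a 0 - Δ / (1 - α)) + Δ / (1 - α)) atTop :=
        limsup_le_limsup (.of_forall (le_pow_mul_add_of_le_mul_add hα0 hα1.ne ha))
          (isCoboundedUnder_le_of_le atTop ha0) hlim.isBoundedUnder_le
    _ = Δ / (1 - α) := hlim.limsup_eq

end Recursion

theorem primal_dual_asymptotic_tracking_general
    {E : Type*} [NormedAddCommGroup E] [InnerProductSpace ℝ E]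
    (Z : ℕ → Set E)
    (proj : ℕ → E → E)
    (hproj : ∀ t, ∀ z : E, proj t z ∈ Z t ∧ ∀ w ∈ Z t, ⟪z - proj t z, w - proj t z⟫ ≤ 0)
    (G : ℕ → E → E) (γ L : ℝ) (hγ : 0 < γ)
    (hmono : ∀ t, ∀ z z' : E, γ * ‖z - z'‖ ^ 2 ≤ ⟪G t z - G t z', z - z'⟫)
    (hlip : ∀ t, ∀ z z' : E, ‖G t z - G t z'‖ ≤ L * ‖z - z'‖)
    (η : ℝ) (hη0 : 0 < η) (hη : η < min (1 / γ) (γ / L ^ 2))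
    (α : ℝ) (hα : α = Real.sqrt (1 - η * γ))
    (Δ : ℝ) (zbar : ℕ → E)
    (hfix : ∀ t, zbar t = proj t (zbar t - η • G t (zbar t)))
    (hdrift : ∀ t, ‖zbar (t + 1) - zbar t‖ ≤ Δ)
    (z : ℕ → E) (hz : ∀ t, z (t + 1) = proj t (z t - η • G t (z t))) :
    Filter.limsup (fun t : ℕ => ‖z t - zbar t‖) Filter.atTop ≤ Δ / (1 - α) := by
  have hηγL : η < γ / L ^ 2 := hη.trans_le (min_le_right _ _)
  have hL2 : 0 < L ^ 2 := (sq_nonneg L).lt_of_ne fun h => by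
    rw [← h, div_zero] at hηγL; linarith
  have hηL : η * L ^ 2 ≤ γ := ((lt_div_iff₀ hL2).mp hηγL).le
  have hα0 : 0 ≤ α := hα ▸ Real.sqrt_nonneg _
  have hα1 : α < 1 := by
    rw [hα, Real.sqrt_lt' one_pos]; nlinarith [mul_pos hη0 hγ]
  refine limsup_le_of_le_mul_add hα0 hα1 (fun t => norm_nonneg _) fun t => ?_
  have hstep : ‖z (t + 1) - zbar t‖ ≤ α * ‖z t - zbar t‖ := by
    have h := (norm_sub_le_of_variational (hproj t) _ _).trans
      (norm_forwardStep_sub_le (hmono t (z t) (zbar t)) (hlip t _ _) hη0.le hηL)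
    rwa [← hz t, ← hfix t, ← hα] at h
  calc ‖z (t + 1) - zbar (t + 1)‖
      ≤ ‖z (t + 1) - zbar t‖ + ‖zbar (t + 1) - zbar t‖ := by
        simpa only [dist_eq_norm] using dist_triangle_right _ _ (zbar t)
    _ ≤ α * ‖z t - zbar t‖ + Δ := add_le_add hstep (hdrift t)

/-- Primal-dual asymptotic tracking: the online projected
primal-dual iterates `z (t+1) = proj t (z t - η • G t (z t))` track the fixed points
(`equilibrium points`) `zbar t` of the time-varying primal-dual maps asymptotically:
`limsup ‖z t - zbar t‖ ≤ Δ / (1 - α)` where `α = √(1 - η γ̂)`. -/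
theorem primal_dual_asymptotic_tracking
    {E : Type*} [NormedAddCommGroup E] [InnerProductSpace ℝ E] [CompleteSpace E]
    (Z : ℕ → Set E) (hZne : ∀ t, (Z t).Nonempty) (hZclosed : ∀ t, IsClosed (Z t))
    (hZconvex : ∀ t, Convex ℝ (Z t))
    (proj : ℕ → E → E)
    (hproj : ∀ t, ∀ z : E, proj t z ∈ Z t ∧ ∀ w ∈ Z t, ⟪z - proj t z, w - proj t z⟫ ≤ 0)
    (G : ℕ → E → E) (γ L : ℝ) (hγ : 0 < γ) (hγL : γ ≤ L)
    (hmono : ∀ t, ∀ z z' : E, γ * ‖z - z'‖ ^ 2 ≤ ⟪G t z - G t z', z - z'⟫)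
    (hlip : ∀ t, ∀ z z' : E, ‖G t z - G t z'‖ ≤ L * ‖z - z'‖)
    (η : ℝ) (hη0 : 0 < η) (hη : η < min (1 / γ) (γ / L ^ 2))
    (α : ℝ) (hα : α = Real.sqrt (1 - η * γ))
    (Δ : ℝ) (zbar : ℕ → E) (hzbarZ : ∀ t, zbar t ∈ Z t)
    (hfix : ∀ t, zbar t = proj t (zbar t - η • G t (zbar t)))
    (hdrift : ∀ t, ‖zbar (t + 1) - zbar t‖ ≤ Δ)
    (z : ℕ → E) (hz : ∀ t, z (t + 1) = proj t (z t - η • G t (z t))) :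
    Filter.limsup (fun t : ℕ => ‖z t - zbar t‖) Filter.atTop ≤ Δ / (1 - α) :=
  primal_dual_asymptotic_tracking_general Z proj hproj G γ L hγ hmono hlip η hη0 hη α hα Δ zbar hfix
    hdrift z hz
end

section
/- Uniqueness of equilibrium points: Let E be a real Hilbert space, Z ⊆ E nonempty and closed, and G : E × E → E a map such that (i) for every fixed ẑ ∈ E, the map z ↦ G(z, ẑ) is γ-strongly monotone with γ > 0, and (ii) for every fixed z ∈ E, ‖G(z, ẑ) - G(z, ẑ')‖ ≤ εL·‖ẑ - ẑ'‖ for all ẑ, ẑ' ∈ E, where εL < γ. Suppose T : E → E satisfies, for every ẑ ∈ E: T ẑ ∈ Z and ⟪G(T ẑ, ẑ), w - T ẑ⟫ ≥ 0 for all w ∈ Z. Then T has a unique fixed point z̄ ∈ Z; equivalently, there is a unique z̄ ∈ Z satisfying ⟪G(z̄, z̄), w - z̄⟫ ≥ 0 for all w ∈ Z. -/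
open RealInnerProductSpace

/-!
Two solutions of variational inequalities over the same set, for operators `F` and `F'` with
`F'` `γ`-strongly monotone, satisfy `γ ‖z - z'‖ ≤ ‖F z - F' z‖`. Applied to `G(·, a)` and
`G(·, b)` this makes `T` Lipschitz with constant `εL / γ < 1`, so Banach's theorem gives a unique
fixed point; applied with `F = F'` it shows that an equilibrium `z` is the only solution of the
variational inequality of `G(·, z)`, i.e. `T z = z`.
-/

section VariationalInequality

variable {E : Type*} [NormedAddCommGroup E] [InnerProductSpace ℝ E]

def StronglyMonotoneWith (γ : ℝ) (F : E → E) : Prop :=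
  ∀ x y, γ * ‖x - y‖ ^ 2 ≤ ⟪F x - F y, x - y⟫

def IsVISolution (F : E → E) (Z : Set E) (z : E) : Prop :=
  z ∈ Z ∧ ∀ w ∈ Z, 0 ≤ ⟪F z, w - z⟫

theorem IsVISolution.mul_norm_sub_le {F F' : E → E} {Z : Set E} {γ : ℝ} {z z' : E}
    (hF' : StronglyMonotoneWith γ F') (hz : IsVISolution F Z z) (hz' : IsVISolution F' Z z') :
    γ * ‖z - z'‖ ≤ ‖F z - F' z‖ := by
  have hvi : 0 ≤ ⟪F z, z' - z⟫ := hz.2 z' hz'.1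
  have hvi' : 0 ≤ ⟪F' z', z - z'⟫ := hz'.2 z hz.1
  have hsq : γ * ‖z - z'‖ ^ 2 ≤ ‖F z - F' z‖ * ‖z - z'‖ :=
    calc γ * ‖z - z'‖ ^ 2 ≤ ⟪F' z - F' z', z - z'⟫ := hF' z z'
      _ = ⟪F' z - F z, z - z'⟫ - ⟪F z, z' - z⟫ - ⟪F' z', z - z'⟫ := by
        rw [← neg_sub z z', inner_neg_right, inner_sub_left, inner_sub_left]
        ring
      _ ≤ ⟪F' z - F z, z - z'⟫ := by linarith
      _ ≤ ‖F' z - F z‖ * ‖z - z'‖ := real_inner_le_norm _ _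
      _ = ‖F z - F' z‖ * ‖z - z'‖ := by rw [norm_sub_rev]
  rcases (norm_nonneg (z - z')).eq_or_lt with h0 | hpos
  · rw [← h0, mul_zero]
    exact norm_nonneg _
  · nlinarith

theorem IsVISolution.unique {F : E → E} {Z : Set E} {γ : ℝ} {z z' : E} (hγ : 0 < γ)
    (hF : StronglyMonotoneWith γ F) (hz : IsVISolution F Z z) (hz' : IsVISolution F Z z') :
    z = z' := by
  have h := hz.mul_norm_sub_le hF hz'
  rw [sub_self, norm_zero] at h
  have : ‖z - z'‖ ≤ 0 := nonpos_of_mul_nonpos_right h hγ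
  exact sub_eq_zero.mp (norm_le_zero_iff.mp this)

end VariationalInequality

theorem ContractingWith.existsUnique_isFixedPt {α : Type*} [MetricSpace α] [Nonempty α]
    [CompleteSpace α] {K : NNReal} {f : α → α} (hf : ContractingWith K f) :
    ∃! x, f x = x :=
  ⟨ContractingWith.fixedPoint f hf, hf.fixedPoint_isFixedPt, fun _ hx => hf.fixedPoint_unique hx⟩

theorem contractingWith_toNNReal_of_dist_le {α : Type*} [MetricSpace α]
    {f : α → α} {q : ℝ} (hq : q < 1) (h : ∀ x y, dist (f x) (f y) ≤ q * dist x y) :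
    ContractingWith q.toNNReal f :=
  ⟨Real.toNNReal_lt_one.mpr hq, LipschitzWith.of_dist_le' h⟩

theorem equilibrium_point_uniqueness_general
    {E : Type*} [NormedAddCommGroup E] [InnerProductSpace ℝ E] [CompleteSpace E]
    (Z : Set E)
    (G : E → E → E) (γ ε L : ℝ) (hγ : 0 < γ) (hεLγ : ε * L < γ)
    (hmono : ∀ zhat : E, ∀ z z' : E, γ * ‖z - z'‖ ^ 2 ≤ ⟪G z zhat - G z' zhat, z - z'⟫)
    (hdev : ∀ z : E, ∀ zhat zhat' : E, ‖G z zhat - G z zhat'‖ ≤ ε * L * ‖zhat - zhat'‖)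
    (T : E → E)
    (hT : ∀ zhat : E, T zhat ∈ Z ∧ ∀ w ∈ Z, 0 ≤ ⟪G (T zhat) zhat, w - T zhat⟫) :
    (∃! zbar : E, zbar ∈ Z ∧ T zbar = zbar) ∧
      (∃! zbar : E, zbar ∈ Z ∧ ∀ w ∈ Z, 0 ≤ ⟪G zbar zbar, w - zbar⟫) := by
  have hsol : ∀ zhat, IsVISolution (G · zhat) Z (T zhat) := hT
  have hlip : ∀ a b, dist (T a) (T b) ≤ ε * L / γ * dist a b := by
    intro a b
    rw [dist_eq_norm, dist_eq_norm, div_mul_eq_mul_div, le_div_iff₀ hγ, mul_comm]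
    exact ((hsol a).mul_norm_sub_le (hmono b) (hsol b)).trans (hdev _ a b)
  have hfix : ∃! z, T z = z :=
    (contractingWith_toNNReal_of_dist_le ((div_lt_one hγ).mpr hεLγ) hlip).existsUnique_isFixedPt
  have hequil : ∀ z, IsVISolution (G · z) Z z ↔ T z = z := fun z =>
    ⟨fun hz => (hsol z).unique hγ (hmono z) hz, fun h => by simpa only [h] using hsol z⟩
  exact ⟨(existsUnique_congr fun z => ⟨And.right, fun h => ⟨h ▸ (hT z).1, h⟩⟩).mpr hfix,
    (existsUnique_congr hequil).mpr hfix⟩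

/-- Uniqueness of equilibrium points: under `ε * L < γ`, the retraining
map `T` (which sends a parameter `ẑ` to the solution of the variational inequality of
`G · ẑ` over `Z`) has a unique fixed point in `Z`; equivalently, there is a unique
`zbar ∈ Z` with `⟪G zbar zbar, w - zbar⟫ ≥ 0` for all `w ∈ Z`. -/
theorem equilibrium_point_uniqueness
    {E : Type*} [NormedAddCommGroup E] [InnerProductSpace ℝ E] [CompleteSpace E]
    (Z : Set E) (hZne : Z.Nonempty) (hZclosed : IsClosed Z)
    (G : E → E → E) (γ ε L : ℝ) (hγ : 0 < γ) (hεLγ : ε * L < γ)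
    (hmono : ∀ zhat : E, ∀ z z' : E, γ * ‖z - z'‖ ^ 2 ≤ ⟪G z zhat - G z' zhat, z - z'⟫)
    (hdev : ∀ z : E, ∀ zhat zhat' : E, ‖G z zhat - G z zhat'‖ ≤ ε * L * ‖zhat - zhat'‖)
    (T : E → E)
    (hT : ∀ zhat : E, T zhat ∈ Z ∧ ∀ w ∈ Z, 0 ≤ ⟪G (T zhat) zhat, w - T zhat⟫) :
    (∃! zbar : E, zbar ∈ Z ∧ T zbar = zbar) ∧
      (∃! zbar : E, zbar ∈ Z ∧ ∀ w ∈ Z, 0 ≤ ⟪G zbar zbar, w - zbar⟫) :=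
  equilibrium_point_uniqueness_general Z G γ ε L hγ hεLγ hmono hdev T hT
end

section
/- Sub-Weibull tail bound implies moment bound: Let ξ be a real random variable and θ, ν₁ > 0 such that P(|ξ| ≥ ε) ≤ 2·exp(-(ε/ν₁)^{1/θ}) for all ε > 0. Then there exists ν₂ > 0 such that (E|ξ|^p)^{1/p} ≤ ν₂·p^θ for all real p ≥ 1. -/
/-!
By the layer cake formula and the substitution `u = (t / ν₁) ^ (1 / θ)`, the tail bound gives
`E|ξ|^p = p ∫₀^∞ t^(p-1) P(|ξ| ≥ t) dt ≤ 2 ν₁^p Γ(pθ + 1)`. Convexity of `Γ` between consecutive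
integers gives `Γ(x) ≤ x^x` for `x ≥ 1`, whence `(2 Γ(pθ + 1))^(1/p) ≤ 2e(θ + 1)^(θ + 1) p^θ`,
so `ν₂ = 2e(θ + 1)^(θ + 1) ν₁` works.
-/

open MeasureTheory Real Set

theorem Real.Gamma_le_rpow_self {x : ℝ} (hx : 1 ≤ x) : Gamma x ≤ x ^ x := by
  set n := ⌊x⌋₊
  have hn1 : 1 ≤ n := Nat.le_floor (by exact_mod_cast hx)
  have hn0 : (0 : ℝ) < n := by exact_mod_cast hn1
  have hnx : (n : ℝ) ≤ x := Nat.floor_le (by linarith)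
  have hxn : x ∈ Icc (n : ℝ) (n + 1) := ⟨hnx, (Nat.lt_floor_add_one x).le⟩
  have hGamma_n : Gamma n ≤ Gamma (n + 1) := by
    rw [Gamma_add_one hn0.ne']
    exact le_mul_of_one_le_left (Gamma_pos_of_pos hn0).le (by exact_mod_cast hn1)
  calc Gamma x ≤ max (Gamma n) (Gamma (n + 1)) :=
        convexOn_Gamma.le_max_of_mem_Icc hn0 (by positivity : (0 : ℝ) < n + 1) hxn
    _ = n.factorial := by rw [max_eq_right hGamma_n, Gamma_nat_eq_factorial]
    _ ≤ (n : ℝ) ^ n := by exact_mod_cast n.factorial_le_pow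
    _ ≤ x ^ n := by gcongr
    _ = x ^ (n : ℝ) := (rpow_natCast x n).symm
    _ ≤ x ^ x := rpow_le_rpow_of_exponent_le hx hnx

theorem two_mul_Gamma_mul_add_one_le {θ p : ℝ} (hθ : 0 ≤ θ) (hp : 1 ≤ p) :
    2 * Gamma (p * θ + 1) ≤ (2 * exp 1 * (θ + 1) ^ (θ + 1) * p ^ θ) ^ p := by
  have hp0 : 0 < p := by linarith
  have h2 : (2 : ℝ) ≤ 2 ^ p := by simpa using rpow_le_rpow_of_exponent_le one_le_two hp
  have hexp : p ≤ exp 1 ^ p := by rw [← exp_mul, one_mul]; linarith [add_one_le_exp p]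
  have hθ1 : (θ + 1) ^ (p * θ + 1) ≤ (θ + 1) ^ ((θ + 1) * p) :=
    rpow_le_rpow_of_exponent_le (by linarith) (by nlinarith)
  calc 2 * Gamma (p * θ + 1)
      ≤ 2 * (p * θ + 1) ^ (p * θ + 1) := by gcongr; exact Gamma_le_rpow_self (by nlinarith)
    _ ≤ 2 * (p * (θ + 1)) ^ (p * θ + 1) := by gcongr; nlinarith
    _ = 2 * p * (θ + 1) ^ (p * θ + 1) * p ^ (θ * p) := by
        rw [mul_rpow hp0.le (by linarith), rpow_add hp0, rpow_one, mul_comm p θ]; ring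
    _ ≤ 2 ^ p * exp 1 ^ p * (θ + 1) ^ ((θ + 1) * p) * p ^ (θ * p) := by gcongr
    _ = (2 * exp 1 * (θ + 1) ^ (θ + 1) * p ^ θ) ^ p := by
        rw [mul_rpow (by positivity) (by positivity), mul_rpow (by positivity) (by positivity),
          mul_rpow (by positivity) (by positivity), ← rpow_mul (by linarith), ← rpow_mul hp0.le]

theorem integral_rpow_sub_one_mul_exp_neg_div_rpow {p θ ν : ℝ} (hp : 0 < p) (hθ : 0 < θ)
    (hν : 0 < ν) :
    ∫ t in Ioi 0, t ^ (p - 1) * exp (-(t / ν) ^ (1 / θ)) = ν ^ p * θ * Gamma (p * θ) := by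
  have hb : (ν⁻¹ ^ (1 / θ)) ^ (-(p - 1 + 1) / (1 / θ)) = ν ^ p := by
    rw [← rpow_mul (inv_nonneg.2 hν.le), inv_rpow hν.le, ← rpow_neg hν.le]
    congr 1
    field_simp
    ring
  have key := integral_rpow_mul_exp_neg_mul_rpow (by positivity : 0 < 1 / θ)
    (by linarith : -1 < p - 1) (by positivity : 0 < ν⁻¹ ^ (1 / θ))
  rw [hb, sub_add_cancel, one_div_one_div, div_div_eq_mul_div, div_one] at key
  rw [← key]
  refine setIntegral_congr_fun measurableSet_Ioi fun t (ht : 0 < t) => ?_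
  rw [div_eq_mul_inv, mul_rpow ht.le (inv_nonneg.2 hν.le), neg_mul, mul_comm (t ^ (1 / θ))]

theorem lintegral_enorm_rpow_le_of_tail_le {Ω : Type*} [MeasurableSpace Ω] {μ : Measure Ω}
    {ξ : Ω → ℝ} (hξ : AEMeasurable ξ μ) {θ ν : ℝ} (hθ : 0 < θ) (hν : 0 < ν)
    (htail : ∀ ε : ℝ, 0 < ε →
      μ {ω | ε ≤ |ξ ω|} ≤ ENNReal.ofReal (2 * exp (-(ε / ν) ^ (1 / θ))))
    {p : ℝ} (hp : 0 < p) :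
    ∫⁻ ω, ‖ξ ω‖ₑ ^ p ∂μ ≤ ENNReal.ofReal (2 * ν ^ p * Gamma (p * θ + 1)) := by
  set g : ℝ → ℝ := fun t => t ^ (p - 1) * exp (-(t / ν) ^ (1 / θ))
  have hg_int : ∫ t in Ioi 0, g t = ν ^ p * θ * Gamma (p * θ) :=
    integral_rpow_sub_one_mul_exp_neg_div_rpow hp hθ hν
  -- The Bochner integral of a non-integrable function is `0`.
  have hg_integrable : IntegrableOn g (Ioi 0) :=
    .of_integral_ne_zero <| by
      rw [hg_int]; exact (mul_pos (by positivity) (Gamma_pos_of_pos (by positivity))).ne'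
  have hg_nonneg : 0 ≤ᵐ[volume.restrict (Ioi 0)] g := by
    filter_upwards [ae_restrict_mem measurableSet_Ioi] with t (ht : 0 < t)
    positivity
  have hlayer := lintegral_rpow_eq_lintegral_meas_le_mul μ (f := fun ω => |ξ ω|)
    (ae_of_all _ fun ω => abs_nonneg _) hξ.abs hp
  simp only [← ENNReal.ofReal_rpow_of_nonneg (abs_nonneg _) hp.le, ← enorm_eq_ofReal_abs]
    at hlayer
  calc ∫⁻ ω, ‖ξ ω‖ₑ ^ p ∂μ
      = ENNReal.ofReal p *
          ∫⁻ t in Ioi 0, μ {ω | t ≤ |ξ ω|} * ENNReal.ofReal (t ^ (p - 1)) := hlayer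
    _ ≤ ENNReal.ofReal p * ∫⁻ t in Ioi 0, ENNReal.ofReal (2 * g t) := by
        gcongr ENNReal.ofReal p * ?_
        refine setLIntegral_mono' measurableSet_Ioi fun t (ht : 0 < t) => ?_
        calc μ {ω | t ≤ |ξ ω|} * ENNReal.ofReal (t ^ (p - 1))
            ≤ ENNReal.ofReal (2 * exp (-(t / ν) ^ (1 / θ))) * ENNReal.ofReal (t ^ (p - 1)) := by
              gcongr; exact htail t ht
          _ = ENNReal.ofReal (2 * g t) := by
              rw [← ENNReal.ofReal_mul (by positivity), mul_assoc, mul_comm (exp _)]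
    _ = ENNReal.ofReal (2 * ν ^ p * Gamma (p * θ + 1)) := by
        rw [← ofReal_integral_eq_lintegral_ofReal (hg_integrable.const_mul 2)
          (hg_nonneg.mono fun t ht => mul_nonneg zero_le_two ht), integral_const_mul, hg_int,
          ← ENNReal.ofReal_mul hp.le, Gamma_add_one (by positivity)]
        ring_nf

theorem subWeibull_tail_implies_moment_general
    {Ω : Type*} [MeasurableSpace Ω] (μ : Measure Ω)
    (ξ : Ω → ℝ) (hmeas : AEStronglyMeasurable ξ μ)
    (θ ν₁ : ℝ) (hθ : 0 < θ) (hν₁ : 0 < ν₁)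
    (htail : ∀ ε : ℝ, 0 < ε →
      μ {ω | ε ≤ |ξ ω|} ≤ ENNReal.ofReal (2 * Real.exp (-(ε / ν₁) ^ (1 / θ)))) :
    ∃ ν₂ : ℝ, 0 < ν₂ ∧
      ∀ p : ℝ, 1 ≤ p → eLpNorm ξ (ENNReal.ofReal p) μ ≤ ENNReal.ofReal (ν₂ * p ^ θ) := by
  set C := 2 * exp 1 * (θ + 1) ^ (θ + 1)
  refine ⟨ν₁ * C, by positivity, fun p hp => ?_⟩
  have hp0 : 0 < p := by linarith
  have hbound : 2 * ν₁ ^ p * Gamma (p * θ + 1) ≤ (ν₁ * C * p ^ θ) ^ p :=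
    calc 2 * ν₁ ^ p * Gamma (p * θ + 1) = ν₁ ^ p * (2 * Gamma (p * θ + 1)) := by ring
      _ ≤ ν₁ ^ p * (C * p ^ θ) ^ p := by gcongr; exact two_mul_Gamma_mul_add_one_le hθ.le hp
      _ = (ν₁ * C * p ^ θ) ^ p := by
        rw [← mul_rpow hν₁.le (by positivity), mul_assoc ν₁ C]
  rw [eLpNorm_eq_lintegral_rpow_enorm_toReal (by simpa using hp0) ENNReal.ofReal_ne_top,
    ENNReal.toReal_ofReal hp0.le]
  calc (∫⁻ ω, ‖ξ ω‖ₑ ^ p ∂μ) ^ (1 / p)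
      ≤ ENNReal.ofReal ((ν₁ * C * p ^ θ) ^ p) ^ (1 / p) := by
        gcongr
        exact (lintegral_enorm_rpow_le_of_tail_le hmeas.aemeasurable hθ hν₁ htail hp0).trans
          (ENNReal.ofReal_le_ofReal hbound)
    _ = ENNReal.ofReal (ν₁ * C * p ^ θ) := by
        rw [ENNReal.ofReal_rpow_of_nonneg (by positivity) (by positivity),
          ← rpow_mul (by positivity), mul_one_div_cancel hp0.ne', rpow_one]

/-- Sub-Weibull tail bound implies moment bound: if
`P(|ξ| ≥ ε) ≤ 2 exp(-(ε/ν₁)^{1/θ})` for all `ε > 0`, then there exists `ν₂ > 0` such that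
`(E|ξ|^p)^{1/p} ≤ ν₂ p^θ` for all `p ≥ 1`. -/
theorem subWeibull_tail_implies_moment
    {Ω : Type*} [MeasurableSpace Ω] (μ : Measure Ω) [IsProbabilityMeasure μ]
    (ξ : Ω → ℝ) (hmeas : AEStronglyMeasurable ξ μ)
    (θ ν₁ : ℝ) (hθ : 0 < θ) (hν₁ : 0 < ν₁)
    (htail : ∀ ε : ℝ, 0 < ε →
      μ {ω | ε ≤ |ξ ω|} ≤ ENNReal.ofReal (2 * Real.exp (-(ε / ν₁) ^ (1 / θ)))) :
    ∃ ν₂ : ℝ, 0 < ν₂ ∧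
      ∀ p : ℝ, 1 ≤ p → eLpNorm ξ (ENNReal.ofReal p) μ ≤ ENNReal.ofReal (ν₂ * p ^ θ) :=
  subWeibull_tail_implies_moment_general μ ξ hmeas θ ν₁ hθ hν₁ htail
end

section
/- Sub-Weibull closure under multiplication: Let ξ₁ and ξ₂ be (possibly dependent) real random variables on a common probability space with (E|ξ₁|^p)^{1/p} ≤ ν₁·p^{θ₁} and (E|ξ₂|^p)^{1/p} ≤ ν₂·p^{θ₂} for all real p ≥ 1, where θ₁, θ₂, ν₁, ν₂ > 0. Then (E|ξ₁·ξ₂|^p)^{1/p} ≤ ψ(θ₁, θ₂)·ν₁·ν₂·p^{θ₁+θ₂} for all p ≥ 1, where ψ(θ₁, θ₂) := (θ₁ + θ₂)^{θ₁+θ₂}/(θ₁^{θ₁}·θ₂^{θ₂}); i.e., ξ₁·ξ₂ ~ SW(θ₁ + θ₂, ψ(θ₁, θ₂)·ν₁·ν₂). -/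
/-!
Split `p` Hölder-wise as `1/p = 1/q + 1/r` with `q = p(θ₁+θ₂)/θ₁` and `r = p(θ₁+θ₂)/θ₂`, so that
`‖ξ₁ξ₂‖_p ≤ ‖ξ₁‖_q ‖ξ₂‖_r ≤ ν₁ q^θ₁ · ν₂ r^θ₂`; both exponents are at least `p ≥ 1`, and the
product of the two powers is exactly `ψ(θ₁, θ₂) p^{θ₁+θ₂}`. This choice of `q, r` minimises
`q^θ₁ r^θ₂` under the Hölder constraint, which is where `ψ` comes from.
-/

open MeasureTheory

theorem ENNReal.ofReal_mul_ofReal_le (a b : ℝ) :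
    ENNReal.ofReal a * ENNReal.ofReal b ≤ ENNReal.ofReal (a * b) := by
  rcases le_total 0 a with ha | ha
  · rw [ENNReal.ofReal_mul ha]
  · simp [ENNReal.ofReal_of_nonpos ha]

theorem ENNReal.holderTriple_ofReal_mul_add_div {p a b : ℝ} (hp : 0 < p) (ha : 0 < a)
    (hb : 0 < b) :
    ENNReal.HolderTriple (ENNReal.ofReal (p * (a + b) / a)) (ENNReal.ofReal (p * (a + b) / b))
      (ENNReal.ofReal p) := by
  rw [ENNReal.holderTriple_iff, ← ENNReal.ofReal_inv_of_pos hp,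
    ← ENNReal.ofReal_inv_of_pos (by positivity), ← ENNReal.ofReal_inv_of_pos (by positivity),
    ← ENNReal.ofReal_add (by positivity) (by positivity)]
  congr 1
  field_simp

theorem Real.mul_add_div_rpow_mul_mul_add_div_rpow {p a b : ℝ} (hp : 0 ≤ p) (ha : 0 < a)
    (hb : 0 < b) :
    (p * (a + b) / a) ^ a * (p * (a + b) / b) ^ b =
      (a + b) ^ (a + b) / (a ^ a * b ^ b) * p ^ (a + b) := by
  have hab : 0 < a + b := add_pos ha hb
  rw [Real.div_rpow (by positivity) ha.le, Real.div_rpow (by positivity) hb.le,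
    Real.mul_rpow hp hab.le, Real.mul_rpow hp hab.le, Real.rpow_add' hp hab.ne',
    Real.rpow_add' hab.le hab.ne']
  field_simp

theorem subWeibull_closure_mul_general
    {Ω : Type*} [MeasurableSpace Ω] (μ : Measure Ω)
    (ξ₁ ξ₂ : Ω → ℝ) (hmeas₁ : AEStronglyMeasurable ξ₁ μ) (hmeas₂ : AEStronglyMeasurable ξ₂ μ)
    (θ₁ θ₂ ν₁ ν₂ : ℝ) (hθ₁ : 0 < θ₁) (hθ₂ : 0 < θ₂)
    (hmom₁ : ∀ p : ℝ, 1 ≤ p → eLpNorm ξ₁ (ENNReal.ofReal p) μ ≤ ENNReal.ofReal (ν₁ * p ^ θ₁))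
    (hmom₂ : ∀ p : ℝ, 1 ≤ p → eLpNorm ξ₂ (ENNReal.ofReal p) μ ≤ ENNReal.ofReal (ν₂ * p ^ θ₂)) :
    ∀ p : ℝ, 1 ≤ p →
      eLpNorm (fun ω => ξ₁ ω * ξ₂ ω) (ENNReal.ofReal p) μ ≤
        ENNReal.ofReal
          ((θ₁ + θ₂) ^ (θ₁ + θ₂) / (θ₁ ^ θ₁ * θ₂ ^ θ₂) * ν₁ * ν₂ * p ^ (θ₁ + θ₂)) := by
  intro p hp
  have hp0 : 0 < p := one_pos.trans_le hp
  have := ENNReal.holderTriple_ofReal_mul_add_div hp0 hθ₁ hθ₂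
  have hq : 1 ≤ p * (θ₁ + θ₂) / θ₁ :=
    hp.trans <| (le_div_iff₀ hθ₁).2 <| mul_le_mul_of_nonneg_left (by linarith) hp0.le
  have hr : 1 ≤ p * (θ₁ + θ₂) / θ₂ :=
    hp.trans <| (le_div_iff₀ hθ₂).2 <| mul_le_mul_of_nonneg_left (by linarith) hp0.le
  calc eLpNorm (fun ω => ξ₁ ω * ξ₂ ω) (ENNReal.ofReal p) μ
      ≤ eLpNorm ξ₁ (ENNReal.ofReal (p * (θ₁ + θ₂) / θ₁)) μ *
          eLpNorm ξ₂ (ENNReal.ofReal (p * (θ₁ + θ₂) / θ₂)) μ :=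
        eLpNorm_smul_le_mul_eLpNorm (φ := ξ₁) hmeas₂ hmeas₁
    _ ≤ ENNReal.ofReal (ν₁ * (p * (θ₁ + θ₂) / θ₁) ^ θ₁) *
          ENNReal.ofReal (ν₂ * (p * (θ₁ + θ₂) / θ₂) ^ θ₂) :=
        mul_le_mul' (hmom₁ _ hq) (hmom₂ _ hr)
    _ ≤ ENNReal.ofReal (ν₁ * (p * (θ₁ + θ₂) / θ₁) ^ θ₁ * (ν₂ * (p * (θ₁ + θ₂) / θ₂) ^ θ₂)) :=
        ENNReal.ofReal_mul_ofReal_le _ _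
    _ = ENNReal.ofReal
          ((θ₁ + θ₂) ^ (θ₁ + θ₂) / (θ₁ ^ θ₁ * θ₂ ^ θ₂) * ν₁ * ν₂ * p ^ (θ₁ + θ₂)) := by
        rw [mul_mul_mul_comm, Real.mul_add_div_rpow_mul_mul_add_div_rpow hp0.le hθ₁ hθ₂]
        ring_nf

/-- Sub-Weibull closure under multiplication: if `ξ₁ ~ SW(θ₁, ν₁)` and
`ξ₂ ~ SW(θ₂, ν₂)` (possibly dependent), then
`ξ₁ * ξ₂ ~ SW(θ₁ + θ₂, ψ(θ₁, θ₂) ν₁ ν₂)` with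
`ψ(θ₁, θ₂) = (θ₁ + θ₂)^{θ₁+θ₂} / (θ₁^{θ₁} θ₂^{θ₂})`. -/
theorem subWeibull_closure_mul
    {Ω : Type*} [MeasurableSpace Ω] (μ : Measure Ω) [IsProbabilityMeasure μ]
    (ξ₁ ξ₂ : Ω → ℝ) (hmeas₁ : AEStronglyMeasurable ξ₁ μ) (hmeas₂ : AEStronglyMeasurable ξ₂ μ)
    (θ₁ θ₂ ν₁ ν₂ : ℝ) (hθ₁ : 0 < θ₁) (hθ₂ : 0 < θ₂) (hν₁ : 0 < ν₁) (hν₂ : 0 < ν₂)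
    (hmom₁ : ∀ p : ℝ, 1 ≤ p → eLpNorm ξ₁ (ENNReal.ofReal p) μ ≤ ENNReal.ofReal (ν₁ * p ^ θ₁))
    (hmom₂ : ∀ p : ℝ, 1 ≤ p → eLpNorm ξ₂ (ENNReal.ofReal p) μ ≤ ENNReal.ofReal (ν₂ * p ^ θ₂)) :
    ∀ p : ℝ, 1 ≤ p →
      eLpNorm (fun ω => ξ₁ ω * ξ₂ ω) (ENNReal.ofReal p) μ ≤
        ENNReal.ofReal
          ((θ₁ + θ₂) ^ (θ₁ + θ₂) / (θ₁ ^ θ₁ * θ₂ ^ θ₂) * ν₁ * ν₂ * p ^ (θ₁ + θ₂)) :=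
  subWeibull_closure_mul_general μ ξ₁ ξ₂ hmeas₁ hmeas₂ θ₁ θ₂ ν₁ ν₂ hθ₁ hθ₂ hmom₁ hmom₂
end

section
/- Stochastic primal-dual tracking in expectation: Let E be a real Hilbert space. For each t ∈ ℕ let Z_t ⊆ E be a nonempty closed convex set with metric projection Π_t : E → E, and let G_t : E → E be γ̂-strongly monotone and L̂-Lipschitz with 0 < γ̂ ≤ L̂. Let 0 < η < min(1/γ̂, γ̂/L̂²) and α := √(1 - ηγ̂) ∈ (0,1). Suppose z̄_t ∈ Z_t satisfies z̄_t = Π_t(z̄_t - η·G_t z̄_t) for every t and that ‖z̄_{t+1} - z̄_t‖ ≤ Δ for all t. Let (ξ_t)_{t∈ℕ} be E-valued random vectors on a probability space with E‖ξ_t‖ ≤ ν for all t, and define the random sequence z_{t+1} = Π_t(z_t - η·(G_t z_t + ξ_t)) from a deterministic initial point z_0 ∈ E. Then for all t ∈ ℕ, E‖z_t - z̄_t‖ ≤ α^t·‖z_0 - z̄_0‖ + Δ/(1 - α) + ην/(1 - α). -/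
/-!
The projected gradient map `z ↦ Π (z - η G z)` is a `√(1 - ηγ)`-contraction: the projection is
nonexpansive, and strong monotonicity together with `η L² ≤ γ` gives
`‖(u - η G u) - (v - η G v)‖² ≤ (1 - 2ηγ + η²L²) ‖u - v‖² ≤ (1 - ηγ) ‖u - v‖²`.
Comparing the iterate with the fixed point `z̄ₜ`, the noise costs `η ‖ξₜ‖` and the drift of the
fixed point costs `Δ`, so `‖z_{t+1} - z̄_{t+1}‖ ≤ α ‖zₜ - z̄ₜ‖ + η ‖ξₜ‖ + Δ` pointwise.
Taking expectations and unrolling the affine recursion gives the bound.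
-/

open MeasureTheory RealInnerProductSpace

section Deterministic

variable {E : Type*} [NormedAddCommGroup E] [InnerProductSpace ℝ E]

def IsMetricProjection (Z : Set E) (P : E → E) : Prop :=
  ∀ z, P z ∈ Z ∧ ∀ w ∈ Z, ⟪z - P z, w - P z⟫ ≤ 0

namespace IsMetricProjection

variable {Z : Set E} {P : E → E}

theorem sq_norm_sub_le_inner (hP : IsMetricProjection Z P) (x y : E) :
    ‖P x - P y‖ ^ 2 ≤ ⟪x - y, P x - P y⟫ := by
  have hx : ⟪x - P x, P y - P x⟫ ≤ 0 := (hP x).2 _ (hP y).1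
  have hy : ⟪y - P y, P x - P y⟫ ≤ 0 := (hP y).2 _ (hP x).1
  have hsplit : x - y = (x - P x) - (y - P y) + (P x - P y) := by abel
  rw [← neg_sub (P x) (P y), inner_neg_right] at hx
  rw [hsplit, inner_add_left, inner_sub_left, real_inner_self_eq_norm_sq]
  linarith

theorem lipschitzWith_one (hP : IsMetricProjection Z P) : LipschitzWith 1 P := by
  refine LipschitzWith.of_dist_le_mul fun x y => ?_
  rw [dist_eq_norm, dist_eq_norm, NNReal.coe_one, one_mul]
  have hsq : ‖P x - P y‖ ^ 2 ≤ ‖x - y‖ * ‖P x - P y‖ :=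
    (hP.sq_norm_sub_le_inner x y).trans (real_inner_le_norm _ _)
  nlinarith [norm_nonneg (P x - P y), norm_nonneg (x - y)]

end IsMetricProjection

section GradientStep

variable {G : E → E} {γ L η : ℝ}

theorem sq_norm_gradientStep_sub_le
    (hmono : ∀ z z' : E, γ * ‖z - z'‖ ^ 2 ≤ ⟪G z - G z', z - z'⟫)
    (hlip : ∀ z z' : E, ‖G z - G z'‖ ≤ L * ‖z - z'‖) (hη : 0 ≤ η) (u v : E) :
    ‖(u - η • G u) - (v - η • G v)‖ ^ 2 ≤ (1 - 2 * η * γ + η ^ 2 * L ^ 2) * ‖u - v‖ ^ 2 := by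
  have hsplit : (u - η • G u) - (v - η • G v) = (u - v) - η • (G u - G v) := by
    rw [smul_sub]; abel
  have hG : ‖G u - G v‖ ^ 2 ≤ (L * ‖u - v‖) ^ 2 :=
    pow_le_pow_left₀ (norm_nonneg _) (hlip u v) 2
  rw [hsplit, norm_sub_sq_real, real_inner_smul_right, real_inner_comm, norm_smul,
    Real.norm_of_nonneg hη]
  nlinarith [mul_le_mul_of_nonneg_left (hmono u v) hη,
    mul_le_mul_of_nonneg_left hG (sq_nonneg η)]

theorem norm_gradientStep_sub_le
    (hmono : ∀ z z' : E, γ * ‖z - z'‖ ^ 2 ≤ ⟪G z - G z', z - z'⟫)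
    (hlip : ∀ z z' : E, ‖G z - G z'‖ ≤ L * ‖z - z'‖) (hη : 0 ≤ η) (hηL : η * L ^ 2 ≤ γ)
    (u v : E) :
    ‖(u - η • G u) - (v - η • G v)‖ ≤ Real.sqrt (1 - η * γ) * ‖u - v‖ := by
  have hsq : ‖(u - η • G u) - (v - η • G v)‖ ^ 2 ≤ (1 - η * γ) * ‖u - v‖ ^ 2 := by
    refine (sq_norm_gradientStep_sub_le hmono hlip hη u v).trans ?_
    gcongr
    nlinarith [mul_le_mul_of_nonneg_left hηL hη]
  calc ‖(u - η • G u) - (v - η • G v)‖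
      ≤ Real.sqrt ((1 - η * γ) * ‖u - v‖ ^ 2) := Real.le_sqrt_of_sq_le hsq
    _ = Real.sqrt (1 - η * γ) * ‖u - v‖ := by
      rw [Real.sqrt_mul' _ (sq_nonneg _), Real.sqrt_sq (norm_nonneg _)]

theorem norm_projGradientStep_sub_fixedPoint_le {P : E → E} {α : ℝ} (hP : LipschitzWith 1 P)
    (hcontr : ∀ u v : E, ‖(u - η • G u) - (v - η • G v)‖ ≤ α * ‖u - v‖) (hη : 0 ≤ η)
    {zbar : E} (hfix : zbar = P (zbar - η • G zbar)) (x e : E) :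
    ‖P (x - η • (G x + e)) - zbar‖ ≤ α * ‖x - zbar‖ + η * ‖e‖ := by
  have hsplit : (x - η • (G x + e)) - (zbar - η • G zbar) =
      ((x - η • G x) - (zbar - η • G zbar)) - η • e := by
    rw [smul_add]; abel
  calc ‖P (x - η • (G x + e)) - zbar‖
      = ‖P (x - η • (G x + e)) - P (zbar - η • G zbar)‖ := by rw [← hfix]
    _ ≤ ‖(x - η • (G x + e)) - (zbar - η • G zbar)‖ := by
      simpa using hP.norm_sub_le _ _
    _ ≤ ‖(x - η • G x) - (zbar - η • G zbar)‖ + ‖η • e‖ := by rw [hsplit]; exact norm_sub_le _ _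
    _ ≤ α * ‖x - zbar‖ + η * ‖e‖ := by
      rw [norm_smul, Real.norm_of_nonneg hη]; gcongr; exact hcontr _ _

end GradientStep

end Deterministic

theorem le_pow_mul_add_div_of_le_mul_add {a : ℕ → ℝ} {α b : ℝ} (hα0 : 0 ≤ α) (hα1 : α < 1)
    (hb : 0 ≤ b) (ha : ∀ t, a (t + 1) ≤ α * a t + b) (t : ℕ) :
    a t ≤ α ^ t * a 0 + b / (1 - α) := by
  have h1α : 0 < 1 - α := sub_pos.2 hα1
  induction t with
  | zero => simpa using div_nonneg hb h1α.le
  | succ t ih =>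
    calc a (t + 1) ≤ α * (α ^ t * a 0 + b / (1 - α)) + b :=
          (ha t).trans (by gcongr)
      _ = α ^ (t + 1) * a 0 + b / (1 - α) := by field_simp; ring

section Stochastic

variable {Ω : Type*} [MeasurableSpace Ω] {μ : Measure Ω}

theorem aestronglyMeasurable_of_succ_eq {E F : Type*} [TopologicalSpace E]
    [TopologicalSpace F] {f : ℕ → E → F → E} (hf : ∀ t, Continuous (Function.uncurry (f t)))
    {ξ : ℕ → Ω → F} (hξ : ∀ t, AEStronglyMeasurable (ξ t) μ) {z : ℕ → Ω → E}
    (hz0 : AEStronglyMeasurable (z 0) μ) (hz : ∀ t ω, z (t + 1) ω = f t (z t ω) (ξ t ω)) :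
    ∀ t, AEStronglyMeasurable (z t) μ
  | 0 => hz0
  | t + 1 => by
    rw [funext (hz t)]
    exact (hf t).comp_aestronglyMeasurable₂
      (aestronglyMeasurable_of_succ_eq hf hξ hz0 hz t) (hξ t)

theorem integral_le_pow_mul_add_div_of_le_mul_add [IsProbabilityMeasure μ]
    {X Y : ℕ → Ω → ℝ} {α b : ℝ} (hα0 : 0 ≤ α) (hα1 : α < 1) (hb : 0 ≤ b)
    (hXmeas : ∀ t, AEStronglyMeasurable (X t) μ) (hXnonneg : ∀ t ω, 0 ≤ X t ω)
    (hX0 : Integrable (X 0) μ) (hY : ∀ t, Integrable (Y t) μ) (hYb : ∀ t, ∫ ω, Y t ω ∂μ ≤ b)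
    (hXY : ∀ t ω, X (t + 1) ω ≤ α * X t ω + Y t ω) (t : ℕ) :
    ∫ ω, X t ω ∂μ ≤ α ^ t * ∫ ω, X 0 ω ∂μ + b / (1 - α) := by
  have hint : ∀ t, Integrable (X t) μ := by
    intro t
    induction t with
    | zero => exact hX0
    | succ t ih =>
      refine ((ih.const_mul α).add (hY t)).mono' (hXmeas (t + 1)) (ae_of_all _ fun ω => ?_)
      rw [Real.norm_of_nonneg (hXnonneg _ ω)]
      exact hXY t ω
  refine le_pow_mul_add_div_of_le_mul_add (a := fun t => ∫ ω, X t ω ∂μ) hα0 hα1 hb (fun t => ?_) t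
  calc ∫ ω, X (t + 1) ω ∂μ ≤ ∫ ω, α * X t ω + Y t ω ∂μ :=
        integral_mono (hint _) (((hint t).const_mul α).add (hY t)) (hXY t)
    _ = α * ∫ ω, X t ω ∂μ + ∫ ω, Y t ω ∂μ := by
      rw [integral_add ((hint t).const_mul α) (hY t), integral_const_mul]
    _ ≤ α * ∫ ω, X t ω ∂μ + b := by gcongr; exact hYb t

end Stochastic

theorem stochastic_primal_dual_tracking_expectation_general
    {E : Type*} [NormedAddCommGroup E] [InnerProductSpace ℝ E]
    {Ω : Type*} [MeasurableSpace Ω] (μ : Measure Ω) [IsProbabilityMeasure μ]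
    (Z : ℕ → Set E)
    (proj : ℕ → E → E)
    (hproj : ∀ t, ∀ z : E, proj t z ∈ Z t ∧ ∀ w ∈ Z t, ⟪z - proj t z, w - proj t z⟫ ≤ 0)
    (G : ℕ → E → E) (γ L : ℝ) (hγ : 0 < γ) (hγL : γ ≤ L)
    (hmono : ∀ t, ∀ z z' : E, γ * ‖z - z'‖ ^ 2 ≤ ⟪G t z - G t z', z - z'⟫)
    (hlip : ∀ t, ∀ z z' : E, ‖G t z - G t z'‖ ≤ L * ‖z - z'‖)
    (η : ℝ) (hη0 : 0 < η) (hη : η < min (1 / γ) (γ / L ^ 2))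
    (α : ℝ) (hα : α = Real.sqrt (1 - η * γ))
    (Δ : ℝ) (zbar : ℕ → E)
    (hfix : ∀ t, zbar t = proj t (zbar t - η • G t (zbar t)))
    (hdrift : ∀ t, ‖zbar (t + 1) - zbar t‖ ≤ Δ)
    (ξ : ℕ → Ω → E) (ν : ℝ) (hξint : ∀ t, Integrable (ξ t) μ)
    (hξ : ∀ t, ∫ ω, ‖ξ t ω‖ ∂μ ≤ ν)
    (z : ℕ → Ω → E) (z₀ : E) (hz0 : ∀ ω, z 0 ω = z₀)
    (hz : ∀ t, ∀ ω, z (t + 1) ω = proj t (z t ω - η • (G t (z t ω) + ξ t ω))) :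
    ∀ t : ℕ,
      ∫ ω, ‖z t ω - zbar t‖ ∂μ ≤
        α ^ t * ‖z₀ - zbar 0‖ + Δ / (1 - α) + η * ν / (1 - α) := by
  have hηL : η * L ^ 2 ≤ γ :=
    ((lt_div_iff₀ (by nlinarith)).1 (hη.trans_le (min_le_right _ _))).le
  have hα0 : 0 ≤ α := hα ▸ Real.sqrt_nonneg _
  have hα1 : α < 1 := hα ▸ (Real.sqrt_lt' one_pos).2 (by nlinarith)
  have hP t : LipschitzWith 1 (proj t) := IsMetricProjection.lipschitzWith_one (hproj t)
  have hstep t ω : ‖z (t + 1) ω - zbar (t + 1)‖ ≤ α * ‖z t ω - zbar t‖ + (η * ‖ξ t ω‖ + Δ) := by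
    have hcontr := hα ▸ norm_gradientStep_sub_le (hmono t) (hlip t) hη0.le hηL
    rw [← add_assoc, hz t ω]
    exact (norm_sub_le_norm_sub_add_norm_sub _ (zbar t) _).trans <| add_le_add
      (norm_projGradientStep_sub_fixedPoint_le (hP t) hcontr hη0.le (hfix t) _ _)
      ((norm_sub_rev _ _).trans_le (hdrift t))
  have hmeas : ∀ t, AEStronglyMeasurable (z t) μ := by
    refine aestronglyMeasurable_of_succ_eq (f := fun t x e => proj t (x - η • (G t x + e)))
      (fun t => ?_) (fun t => (hξint t).1) (by simp only [funext hz0, aestronglyMeasurable_const]) hz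
    have hG : Continuous (G t) := (LipschitzWith.of_dist_le' (K := L) fun x y => by
      simpa only [dist_eq_norm] using hlip t x y).continuous
    have hPt : Continuous (proj t) := (hP t).continuous
    fun_prop
  have hΔ : 0 ≤ Δ := (norm_nonneg _).trans (hdrift 0)
  have hν : 0 ≤ ν := (integral_nonneg fun _ => norm_nonneg _).trans (hξ 0)
  intro t
  have key := integral_le_pow_mul_add_div_of_le_mul_add (X := fun t ω => ‖z t ω - zbar t‖)
    (Y := fun t ω => η * ‖ξ t ω‖ + Δ) (b := η * ν + Δ) hα0 hα1 (by positivity)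
    (fun t => ((hmeas t).sub aestronglyMeasurable_const).norm) (fun _ _ => norm_nonneg _)
    (by simp only [hz0, integrable_const]) (fun t => ((hξint t).norm.const_mul η).add
      (integrable_const Δ))
    (fun t => by
      rw [integral_add ((hξint t).norm.const_mul η) (integrable_const Δ), integral_const_mul]
      simpa using mul_le_mul_of_nonneg_left (hξ t) hη0.le) hstep t
  simp only [hz0, integral_const, probReal_univ, one_smul] at key
  linarith [add_div (η * ν) Δ (1 - α)]

/-- Stochastic primal-dual tracking in expectation: the stochastic
projected primal-dual iterates `z (t+1) = proj t (z t - η • (G t (z t) + ξ t))`, driven by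
gradient-estimation errors `ξ t` with `E‖ξ t‖ ≤ ν`, track the equilibrium points `zbar t`
in expectation: `E‖z t - zbar t‖ ≤ α^t ‖z 0 - zbar 0‖ + Δ/(1-α) + ην/(1-α)`. -/
theorem stochastic_primal_dual_tracking_expectation
    {E : Type*} [NormedAddCommGroup E] [InnerProductSpace ℝ E] [CompleteSpace E]
    {Ω : Type*} [MeasurableSpace Ω] (μ : Measure Ω) [IsProbabilityMeasure μ]
    (Z : ℕ → Set E) (hZne : ∀ t, (Z t).Nonempty) (hZclosed : ∀ t, IsClosed (Z t))
    (hZconvex : ∀ t, Convex ℝ (Z t))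
    (proj : ℕ → E → E)
    (hproj : ∀ t, ∀ z : E, proj t z ∈ Z t ∧ ∀ w ∈ Z t, ⟪z - proj t z, w - proj t z⟫ ≤ 0)
    (G : ℕ → E → E) (γ L : ℝ) (hγ : 0 < γ) (hγL : γ ≤ L)
    (hmono : ∀ t, ∀ z z' : E, γ * ‖z - z'‖ ^ 2 ≤ ⟪G t z - G t z', z - z'⟫)
    (hlip : ∀ t, ∀ z z' : E, ‖G t z - G t z'‖ ≤ L * ‖z - z'‖)
    (η : ℝ) (hη0 : 0 < η) (hη : η < min (1 / γ) (γ / L ^ 2))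
    (α : ℝ) (hα : α = Real.sqrt (1 - η * γ))
    (Δ : ℝ) (zbar : ℕ → E) (hzbarZ : ∀ t, zbar t ∈ Z t)
    (hfix : ∀ t, zbar t = proj t (zbar t - η • G t (zbar t)))
    (hdrift : ∀ t, ‖zbar (t + 1) - zbar t‖ ≤ Δ)
    (ξ : ℕ → Ω → E) (ν : ℝ) (hξint : ∀ t, Integrable (ξ t) μ)
    (hξ : ∀ t, ∫ ω, ‖ξ t ω‖ ∂μ ≤ ν)
    (z : ℕ → Ω → E) (z₀ : E) (hz0 : ∀ ω, z 0 ω = z₀)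
    (hz : ∀ t, ∀ ω, z (t + 1) ω = proj t (z t ω - η • (G t (z t ω) + ξ t ω))) :
    ∀ t : ℕ,
      ∫ ω, ‖z t ω - zbar t‖ ∂μ ≤
        α ^ t * ‖z₀ - zbar 0‖ + Δ / (1 - α) + η * ν / (1 - α) :=
  stochastic_primal_dual_tracking_expectation_general μ Z proj hproj G γ L hγ hγL hmono hlip η hη0
    hη α hα Δ zbar hfix hdrift ξ ν hξint hξ z z₀ hz0 hz
end
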